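/- If G is a connected graph of diameter at most 2, then b(G) = b_g(G), i.e. the burning number equals the game burning number. -/
import Mathlib


namespace BurningGame

/-- One spreading phase: all neighbors of burned vertices become burned. -/
noncomputable def spread {V : Type*} [Fintype V] [DecidableEq V] (G : SimpleGraph V) (B : Finset V) : Finset V :=
  ((↑B : Set V) ∪ {v | ∃ u ∈ B, G.Adj u v}).toFinite.toFinset

/-- `EndBy G turn i B k`: starting from burned set `B` at round index `i`
(the player selecting in round `i` is Burner iff `turn i = true`; Burner's selections are
quantified existentially, Staller's universally), Burner can force the game to end
within `k` further rounds. -/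
def EndBy {V : Type*} [Fintype V] [DecidableEq V] (G : SimpleGraph V) (turn : ℕ → Bool) :
    ℕ → Finset V → ℕ → Prop
  | _, B, 0 => B = Finset.univ
  | i, B, k + 1 => B = Finset.univ ∨
      spread G B = Finset.univ ∨
      (if turn i then ∃ v ∉ spread G B, EndBy G turn (i + 1) (insert v (spread G B)) k
       else ∀ v ∉ spread G B, EndBy G turn (i + 1) (insert v (spread G B)) k)

/-- Game burning number relative to a preburned set `S` (Burner starts). -/
noncomputable def bgRel {V : Type*} [Fintype V] [DecidableEq V] (G : SimpleGraph V) (S : Finset V) : ℕ :=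
  sInf {k | EndBy G (fun i => i % 2 == 0) 0 S k}

/-- The game burning number (Burner starts). -/
noncomputable def bg {V : Type*} [Fintype V] [DecidableEq V] (G : SimpleGraph V) : ℕ := bgRel G ∅

/-- The Staller-start game burning number. -/
noncomputable def bg' {V : Type*} [Fintype V] [DecidableEq V] (G : SimpleGraph V) : ℕ :=
  sInf {k | EndBy G (fun i => i % 2 == 1) 0 ∅ k}

/-- The burning number: only Burner plays. -/
noncomputable def burn {V : Type*} [Fintype V] [DecidableEq V] (G : SimpleGraph V) : ℕ :=
  sInf {k | EndBy G (fun _ => true) 0 ∅ k}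

/-- The cooling number: only Staller plays. -/
noncomputable def cool {V : Type*} [Fintype V] [DecidableEq V] (G : SimpleGraph V) : ℕ :=
  sInf {k | EndBy G (fun _ => false) 0 ∅ k}


/-- Eccentricity of a vertex. -/
noncomputable def ecc {V : Type*} [Fintype V] (G : SimpleGraph V) (v : V) : ℕ :=
  Finset.univ.sup (fun u => G.dist v u)

/-- Radius of a graph. -/
noncomputable def radius {V : Type*} [Fintype V] (G : SimpleGraph V) : ℕ :=
  sInf (Set.range (ecc G))

/-- Diameter of a graph. -/
noncomputable def diam {V : Type*} [Fintype V] (G : SimpleGraph V) : ℕ :=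
  sSup (Set.range (ecc G))

section Aux

variable {V : Type*} [Fintype V] [DecidableEq V] (G : SimpleGraph V)

lemma mem_spread (B : Finset V) (x : V) :
    x ∈ spread G B ↔ x ∈ B ∨ ∃ u ∈ B, G.Adj u x := by
  simp [spread]

lemma subset_spread (B : Finset V) : B ⊆ spread G B :=
  fun x hx => (mem_spread G B x).2 (Or.inl hx)

lemma spread_mono {B C : Finset V} (h : B ⊆ C) : spread G B ⊆ spread G C := by
  intro x hx
  rw [mem_spread] at hx ⊢
  rcases hx with hx | ⟨u, hu, hadj⟩
  · exact Or.inl (h hx)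
  · exact Or.inr ⟨u, h hu, hadj⟩

lemma spread_empty : spread G (∅ : Finset V) = ∅ := by
  ext x; simp [mem_spread]

lemma endBy_mono (t : ℕ → Bool) :
    ∀ k i (B : Finset V), EndBy G t i B k → EndBy G t i B (k + 1) := by
  intro k
  induction k with
  | zero => exact fun i B h => Or.inl h
  | succ k ih =>
    intro i B h
    rcases h with h | h | h
    · exact Or.inl h
    · exact Or.inr (Or.inl h)
    · refine Or.inr (Or.inr ?_)
      by_cases ht : t i
      · simp only [ht, if_true] at h ⊢
        obtain ⟨v, hv, h⟩ := h
        exact ⟨v, hv, ih _ _ h⟩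
      · simp only [ht, if_false] at h ⊢
        exact fun v hv => ih _ _ (h v hv)

lemma endBy_of_le (t : ℕ → Bool) {k m : ℕ} (hkm : k ≤ m) {i : ℕ} {B : Finset V}
    (h : EndBy G t i B k) : EndBy G t i B m := by
  induction hkm with
  | refl => exact h
  | step _ ih => exact endBy_mono G t _ _ _ ih

lemma spread_spread_singleton (hG : G.Connected) (hd : diam G ≤ 2) (v : V) :
    spread G (spread G {v}) = Finset.univ := by
  apply Finset.eq_univ_of_forall
  intro u
  have hdist : G.dist v u ≤ 2 := by
    have h1 : G.dist v u ≤ ecc G v := Finset.le_sup (Finset.mem_univ u)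
    have h2 : ecc G v ≤ diam G :=
      le_csSup (Set.Finite.bddAbove (Set.finite_range _)) (Set.mem_range_self v)
    omega
  obtain ⟨p, hp⟩ := hG.exists_walk_length_eq_dist v u
  have hlen : p.length ≤ 2 := hp ▸ hdist
  rcases p with _ | ⟨h, q⟩
  · exact subset_spread G _ (subset_spread G _ (Finset.mem_singleton_self v))
  · rcases q with _ | ⟨h', q'⟩
    · exact subset_spread G _ ((mem_spread G _ _).2
        (Or.inr ⟨v, Finset.mem_singleton_self v, h⟩))
    · rcases q' with _ | ⟨h'', q''⟩
      · have hb : _ ∈ spread G {v} :=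
          (mem_spread G _ _).2 (Or.inr ⟨v, Finset.mem_singleton_self v, h⟩)
        exact (mem_spread G _ _).2 (Or.inr ⟨_, hb, h'⟩)
      · simp [SimpleGraph.Walk.length_cons] at hlen

lemma last_round_iff (s : Finset V) (b : Bool) :
    (s = Finset.univ ∨
      (if b then ∃ v ∉ s, insert v s = Finset.univ else ∀ v ∉ s, insert v s = Finset.univ))
    ↔ (s = Finset.univ ∨ ∃ v ∉ s, insert v s = Finset.univ) := by
  cases b with
  | true => simp
  | false =>
    simp only [Bool.false_eq_true, if_false]
    constructor
    · rintro (h | h)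
      · exact Or.inl h
      · by_cases hs : s = Finset.univ
        · exact Or.inl hs
        · obtain ⟨v, hv⟩ : ∃ v, v ∉ s := by
            by_contra hc
            push_neg at hc
            exact hs (Finset.eq_univ_iff_forall.2 hc)
          exact Or.inr ⟨v, hv, h v hv⟩
    · rintro (h | ⟨v, hv, h⟩)
      · exact Or.inl h
      · refine Or.inr (fun w hw => ?_)
        have hmem : w ∈ insert v s := h ▸ Finset.mem_univ w
        rcases Finset.mem_insert.1 hmem with rfl | hws
        · exact h
        · exact absurd hws hw

lemma endBy_one_iff' (t : ℕ → Bool) (i : ℕ) (B : Finset V) :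
    EndBy G t i B 1 ↔
      (B = Finset.univ ∨ spread G B = Finset.univ ∨
        ∃ v ∉ spread G B, insert v (spread G B) = Finset.univ) := by
  simp only [EndBy]
  exact or_congr_right (last_round_iff (spread G B) (t i))

lemma endBy_one_iff (t t' : ℕ → Bool) (i j : ℕ) (B : Finset V) :
    EndBy G t i B 1 ↔ EndBy G t' j B 1 := by
  rw [endBy_one_iff', endBy_one_iff']

lemma endBy_two_singleton (hG : G.Connected) (hd : diam G ≤ 2)
    (t : ℕ → Bool) (i : ℕ) (v : V) : EndBy G t i {v} 2 := by
  by_cases hs : spread G {v} = Finset.univ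
  · exact Or.inr (Or.inl hs)
  · refine Or.inr (Or.inr ?_)
    have step : ∀ w ∉ spread G {v},
        EndBy G t (i + 1) (insert w (spread G {v})) 1 := by
      intro w _
      refine Or.inr (Or.inl ?_)
      apply Finset.univ_subset_iff.1
      calc Finset.univ = spread G (spread G {v}) :=
            (spread_spread_singleton G hG hd v).symm
        _ ⊆ spread G (insert w (spread G {v})) :=
            spread_mono G (Finset.subset_insert _ _)
    by_cases ht : t i
    · simp only [ht, if_true]
      obtain ⟨w, hw⟩ : ∃ w, w ∉ spread G {v} := by
        by_contra hc
        push_neg at hc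
        exact hs (Finset.eq_univ_iff_forall.2 hc)
      exact ⟨w, hw, step w hw⟩
    · simp only [ht, if_false]
      exact step

lemma endBy_three (hG : G.Connected) (hd : diam G ≤ 2) [Nonempty V]
    (t : ℕ → Bool) : EndBy G t 0 ∅ 3 := by
  refine Or.inr (Or.inr ?_)
  have key : ∀ v ∉ spread G (∅ : Finset V),
      EndBy G t 1 (insert v (spread G ∅)) 2 := by
    intro v _
    have : insert v (spread G (∅ : Finset V)) = {v} := by
      rw [spread_empty]; rfl
    rw [this]
    exact endBy_two_singleton G hG hd t 1 v
  by_cases ht : t 0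
  · simp only [ht, if_true]
    obtain ⟨v⟩ := ‹Nonempty V›
    have hv : v ∉ spread G (∅ : Finset V) := by simp [spread_empty]
    exact ⟨v, hv, key v hv⟩
  · simp only [ht, if_false]
    exact key

lemma endBy_isEmpty [IsEmpty V] (t : ℕ → Bool) (k i : ℕ) (B : Finset V) :
    EndBy G t i B k := by
  have hB : B = Finset.univ := Subsingleton.elim _ _
  cases k with
  | zero => exact hB
  | succ k => exact Or.inl hB

end Aux

set_option linter.unusedSectionVars false in
theorem stmt10 {V : Type*} [Fintype V] [DecidableEq V] (G : SimpleGraph V)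
    (hG : G.Connected) (hd : diam G ≤ 2) :
    burn G = bg G := by
  unfold burn bg bgRel
  congr 1
  ext k
  simp only [Set.mem_setOf_eq]
  cases isEmpty_or_nonempty V with
  | inl h =>
    exact ⟨fun _ => endBy_isEmpty G _ k 0 ∅, fun _ => endBy_isEmpty G _ k 0 ∅⟩
  | inr h =>
    match k with
    | 0 => exact Iff.rfl
    | 1 => exact endBy_one_iff G _ _ 0 0 ∅
    | 2 =>
      show (_ ∨ _ ∨ _) ↔ (_ ∨ _ ∨ _)
      refine or_congr_right (or_congr_right ?_)
      have h1 : (fun _ : ℕ => true) 0 = true := rfl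
      have h2 : (fun i : ℕ => i % 2 == 0) 0 = true := rfl
      rw [if_pos h1, if_pos h2]
      exact exists_congr fun v => and_congr_right fun _ =>
        endBy_one_iff G _ _ 1 1 _
    | (k + 3) =>
      constructor
      · intro _
        exact endBy_of_le G _ (by omega) (endBy_three G hG hd _)
      · intro _
        exact endBy_of_le G _ (by omega) (endBy_three G hG hd _)

end BurningGame
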